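/- Let C and D be Hopf algebras; let N be a C-bicomodule whose left C-comodule structure is trivial (δ_L^C(x) = 1 ⊗ x); suppose N carries a left D-comodule structure δ_L^D making N a (D, C)-bicomodule (the left D-coaction compatible with the right C-coaction), and give C the trivial left D-comodule structure. Equip each N ⊗ C^{⊗i} with the left D-comodule structure δ_L^D(x ⊗ c¹ ⊗ ⋯ ⊗ cⁱ) = δ_L^D(x) ⊗ c¹ ⊗ ⋯ ⊗ cⁱ. Then each differential dⁱ: N ⊗ C^{⊗i} → N ⊗ C^{⊗(i+1)} of the coHochschild complex is a morphism of left D-comodules, and consequently every coHochschild homology group Hoch^i(C, N) inherits a left D-comodule structure. -/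

import Mathlib

/-!
STATEMENT 3: Let `C`, `D` be Hopf algebras, `N` a `C`-bicomodule with trivial left
`C`-coaction, carrying a left `D`-comodule structure making it a `(D,C)`-bicomodule,
`C` having the trivial left `D`-comodule structure.  Equip each term `N ⊗ C^{⊗ i}`
of the coHochschild complex with the left `D`-comodule structure
`δ_L^D(x ⊗ c¹ ⊗ ⋯ ⊗ cⁱ) = δ_L^D(x) ⊗ c¹ ⊗ ⋯ ⊗ cⁱ`.  Then every differential
`dⁱ : N ⊗ C^{⊗i} → N ⊗ C^{⊗(i+1)}` is a morphism of left `D`-comodules, and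
consequently every coHochschild homology group `Hoch^i(C,N)` inherits a left
`D`-comodule structure.
-/

noncomputable section

open TensorProduct

variable (K C : Type) [CommRing K] [AddCommGroup C] [Module K C]

/-- A bicomodule datum over a coalgebra `C`. -/
structure BicomodData where
  carrier : Type
  [acg : AddCommGroup carrier]
  [mod : Module K carrier]
  coactL : carrier →ₗ[K] C ⊗[K] carrier
  coactR : carrier →ₗ[K] carrier ⊗[K] C

attribute [instance] BicomodData.acg BicomodData.mod

variable {K C} (comul : C →ₗ[K] C ⊗[K] C)

/-- Tensoring a bicomodule with `C` on the right (the coefficient step of the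
coHochschild complex). -/
def BicomodData.step (B : BicomodData K C) : BicomodData K C where
  carrier := B.carrier ⊗[K] C
  coactL := (TensorProduct.assoc K C B.carrier C).toLinearMap ∘ₗ
    (LinearMap.rTensor C B.coactL)
  coactR := (TensorProduct.assoc K B.carrier C C).symm.toLinearMap ∘ₗ
    (LinearMap.lTensor B.carrier comul)

/-- `cochain comul i B` has carrier `B.carrier ⊗ C^{⊗ i}`. -/
def cochain : ℕ → BicomodData K C → BicomodData K C
  | 0, B => B
  | (i+1), B => cochain i (B.step comul)

/-- Functoriality of `cochain` in the coefficient module. -/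
def cochainMap : (i : ℕ) → (B B' : BicomodData K C) → (B.carrier →ₗ[K] B'.carrier) →
    ((cochain comul i B).carrier →ₗ[K] (cochain comul i B').carrier)
  | 0, _, _, f => f
  | (i+1), B, B', f => cochainMap i (B.step comul) (B'.step comul) (LinearMap.rTensor C f)

/-- The coHochschild (Cartier) differential
`δ(x ⊗ c₁ ⊗ ⋯ ⊗ cᵢ) = δ_R(x) ⊗ c₁ ⊗ ⋯ + Σⱼ(−1)ʲ x ⊗ ⋯ ⊗ Δ(cⱼ) ⊗ ⋯ +
(−1)^{i+1} x₍₀₎ ⊗ c₁ ⊗ ⋯ ⊗ cᵢ ⊗ x₍₋₁₎`. -/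
def cobarD : (i : ℕ) → (B : BicomodData K C) →
    ((cochain comul i B).carrier →ₗ[K] (cochain comul (i+1) B).carrier)
  | 0, B => B.coactR - (TensorProduct.comm K C B.carrier).toLinearMap ∘ₗ B.coactL
  | (i+1), B =>
      show (cochain comul i (B.step comul)).carrier →ₗ[K]
          (cochain comul (i+1) (B.step comul)).carrier from
        (show (cochain comul i (B.step comul)).carrier →ₗ[K]
            (cochain comul (i+1) (B.step comul)).carrier from
          cochainMap comul i (B.step comul) ((B.step comul).step comul)
            (LinearMap.rTensor C B.coactR)) - cobarD i (B.step comul)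

variable (D : Type) [AddCommGroup D] [Module K D]

/-- The left `D`-comodule structure on `N ⊗ C^{⊗ i}` induced by a left `D`-coaction
on the coefficients `N` : `x ⊗ c¹ ⊗ ⋯ ⊗ cⁱ ↦ δ(x) ⊗ c¹ ⊗ ⋯ ⊗ cⁱ`. -/
def Dcoact : (i : ℕ) → (B : BicomodData K C) → (B.carrier →ₗ[K] D ⊗[K] B.carrier) →
    ((cochain comul i B).carrier →ₗ[K] D ⊗[K] (cochain comul i B).carrier)
  | 0, _, δ => δ
  | (i+1), B, δ => Dcoact i (B.step comul)
      ((TensorProduct.assoc K D B.carrier C).toLinearMap ∘ₗ LinearMap.rTensor C δ)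

/-!
The `D`-coaction on `N ⊗ C^{⊗ i}` only touches `N`, and `C` carries the trivial
`D`-coaction. Every face of the differential either rearranges or comultiplies the
`C`-factors, which is colinear for such coactions, or applies one of the maps
`x ↦ δ_R(x)` and `x ↦ x₍₀₎ ⊗ x₍₋₁₎` to the coefficients, which are colinear because
`δ_R` commutes with `δ_L^D` and `δ_L^C` is trivial. Following the recursive definition
of `cobarD`, colinearity propagates from `N` to `N ⊗ C`. Since `D` is flat over the
field `K`, the coaction restricts to cocycles and descends to cohomology.
-/

section Colinear

variable {K D M N P Q : Type*} [CommRing K] [AddCommGroup D] [Module K D]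
  [AddCommGroup M] [Module K M] [AddCommGroup N] [Module K N]
  [AddCommGroup P] [Module K P] [AddCommGroup Q] [Module K Q]

def IsColinear (δM : M →ₗ[K] D ⊗[K] M) (δN : N →ₗ[K] D ⊗[K] N) (f : M →ₗ[K] N) : Prop :=
  f.lTensor D ∘ₗ δM = δN ∘ₗ f

variable (P) in
def rTensorCoaction (δ : M →ₗ[K] D ⊗[K] M) :
    M ⊗[K] P →ₗ[K] D ⊗[K] (M ⊗[K] P) :=
  (TensorProduct.assoc K D M P).toLinearMap ∘ₗ δ.rTensor P

variable {δM : M →ₗ[K] D ⊗[K] M} {δN : N →ₗ[K] D ⊗[K] N} {δP : P →ₗ[K] D ⊗[K] P}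

theorem IsColinear.comp {f : M →ₗ[K] N} {g : N →ₗ[K] P} (hg : IsColinear δN δP g)
    (hf : IsColinear δM δN f) : IsColinear δM δP (g ∘ₗ f) := by
  unfold IsColinear at *
  rw [LinearMap.lTensor_comp, LinearMap.comp_assoc, hf, ← LinearMap.comp_assoc, hg,
    LinearMap.comp_assoc]

theorem IsColinear.sub {f g : M →ₗ[K] N} (hf : IsColinear δM δN f) (hg : IsColinear δM δN g) :
    IsColinear δM δN (f - g) := by
  unfold IsColinear at *
  rw [LinearMap.lTensor_sub, LinearMap.sub_comp, LinearMap.comp_sub, hf, hg]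

theorem IsColinear.rTensor {f : M →ₗ[K] N} (hf : IsColinear δM δN f) :
    IsColinear (rTensorCoaction P δM) (rTensorCoaction P δN) (f.rTensor P) := by
  unfold IsColinear rTensorCoaction at *
  rw [← LinearMap.comp_assoc, LinearMap.lTensor_rTensor_comp_assoc, LinearMap.comp_assoc,
    ← LinearMap.rTensor_comp, hf, LinearMap.rTensor_comp, LinearMap.comp_assoc]

theorem isColinear_lTensor (g : P →ₗ[K] Q) :
    IsColinear (rTensorCoaction P δM) (rTensorCoaction Q δM) (g.lTensor M) := by
  unfold IsColinear rTensorCoaction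
  have hassoc : (g.lTensor M).lTensor D ∘ₗ (TensorProduct.assoc K D M P).toLinearMap =
      (TensorProduct.assoc K D M Q).toLinearMap ∘ₗ g.lTensor (D ⊗[K] M) :=
    TensorProduct.ext_threefold fun _ _ _ ↦ rfl
  rw [← LinearMap.comp_assoc, hassoc, LinearMap.comp_assoc, LinearMap.lTensor_comp_rTensor,
    ← LinearMap.rTensor_comp_lTensor, LinearMap.comp_assoc]

theorem isColinear_assoc_symm :
    IsColinear (rTensorCoaction (P ⊗[K] Q) δM) (rTensorCoaction Q (rTensorCoaction P δM))
      (TensorProduct.assoc K M P Q).symm.toLinearMap := by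
  unfold IsColinear rTensorCoaction
  have pentagon : ((TensorProduct.assoc K M P Q).symm.toLinearMap.lTensor D ∘ₗ
      (TensorProduct.assoc K D M (P ⊗[K] Q)).toLinearMap) ∘ₗ
        (TensorProduct.assoc K (D ⊗[K] M) P Q).toLinearMap =
      (TensorProduct.assoc K D (M ⊗[K] P) Q).toLinearMap ∘ₗ
        (TensorProduct.assoc K D M P).toLinearMap.rTensor Q := by
    ext; rfl
  rw [LinearMap.rTensor_tensor]
  simp only [← LinearMap.comp_assoc]
  rw [pentagon]
  simp only [LinearMap.comp_assoc, LinearMap.rTensor_comp]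

theorem IsColinear.of_symm {e : M ≃ₗ[K] N} (he : IsColinear δN δM e.symm.toLinearMap) :
    IsColinear δM δN e.toLinearMap := by
  unfold IsColinear at *
  ext x
  have hx : e.symm.toLinearMap.lTensor D (δN (e x)) = δM x := by
    simpa using congr($he (e x))
  rw [LinearMap.comp_apply, ← hx, ← LinearMap.comp_apply (e.toLinearMap.lTensor D),
    ← LinearMap.lTensor_comp, LinearEquiv.comp_symm, LinearMap.lTensor_id]
  rfl

theorem isColinear_assoc :
    IsColinear (rTensorCoaction Q (rTensorCoaction P δM)) (rTensorCoaction (P ⊗[K] Q) δM)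
      (TensorProduct.assoc K M P Q).toLinearMap :=
  isColinear_assoc_symm.of_symm

theorem isColinear_rightComm :
    IsColinear (rTensorCoaction Q (rTensorCoaction P δM))
      (rTensorCoaction P (rTensorCoaction Q δM)) (TensorProduct.rightComm K M P Q).toLinearMap := by
  have h : (TensorProduct.rightComm K M P Q).toLinearMap =
      (TensorProduct.assoc K M Q P).symm.toLinearMap ∘ₗ
        (TensorProduct.comm K P Q).toLinearMap.lTensor M ∘ₗ
        (TensorProduct.assoc K M P Q).toLinearMap :=
    TensorProduct.ext_threefold fun _ _ _ ↦ rfl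
  rw [h]
  exact isColinear_assoc_symm.comp ((isColinear_lTensor _).comp isColinear_assoc)

theorem isColinear_rTensor_mk (c : P) :
    IsColinear δM (rTensorCoaction P δM) ((TensorProduct.mk K M P).flip c) := by
  unfold IsColinear rTensorCoaction
  have h : ((TensorProduct.mk K M P).flip c).lTensor D =
      (TensorProduct.assoc K D M P).toLinearMap ∘ₗ (TensorProduct.mk K (D ⊗[K] M) P).flip c := by
    ext; rfl
  rw [h, LinearMap.comp_assoc]
  rfl

end Colinear

section Cobar

variable {K C D : Type} [CommRing K] [AddCommGroup C] [Module K C] [AddCommGroup D] [Module K D]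
  (comul : C →ₗ[K] C ⊗[K] C)

theorem IsColinear.cochainMap {B B' : BicomodData K C} {δ : B.carrier →ₗ[K] D ⊗[K] B.carrier}
    {δ' : B'.carrier →ₗ[K] D ⊗[K] B'.carrier} {f : B.carrier →ₗ[K] B'.carrier}
    (hf : IsColinear δ δ' f) (i : ℕ) :
    IsColinear (Dcoact comul D i B δ) (Dcoact comul D i B' δ') (cochainMap comul i B B' f) := by
  induction i generalizing B B' with
  | zero => exact hf
  | succ i ih => exact ih (B := B.step comul) (B' := B'.step comul) hf.rTensor

theorem isColinear_step_coactR (B : BicomodData K C) (δ : B.carrier →ₗ[K] D ⊗[K] B.carrier) :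
    IsColinear (rTensorCoaction C δ) (rTensorCoaction C (rTensorCoaction C δ))
      (B.step comul).coactR :=
  isColinear_assoc_symm.comp (isColinear_lTensor comul)

theorem step_comm_coactL (B : BicomodData K C) :
    (TensorProduct.comm K C (B.step comul).carrier).toLinearMap ∘ₗ (B.step comul).coactL =
      (TensorProduct.rightComm K B.carrier C C).toLinearMap ∘ₗ
        ((TensorProduct.comm K C B.carrier).toLinearMap ∘ₗ B.coactL).rTensor C := by
  have h : (TensorProduct.comm K C (B.carrier ⊗[K] C)).toLinearMap ∘ₗ
      (TensorProduct.assoc K C B.carrier C).toLinearMap =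
      (TensorProduct.rightComm K B.carrier C C).toLinearMap ∘ₗ
        (TensorProduct.comm K C B.carrier).toLinearMap.rTensor C :=
    TensorProduct.ext_threefold fun _ _ _ ↦ rfl
  rw [LinearMap.rTensor_comp, ← LinearMap.comp_assoc, ← h]
  rfl

theorem isColinear_cobarD (B : BicomodData K C) (δ : B.carrier →ₗ[K] D ⊗[K] B.carrier)
    (hL : IsColinear δ (rTensorCoaction C δ)
      ((TensorProduct.comm K C B.carrier).toLinearMap ∘ₗ B.coactL))
    (hR : IsColinear δ (rTensorCoaction C δ) B.coactR) (i : ℕ) :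
    IsColinear (Dcoact comul D i B δ) (Dcoact comul D (i + 1) B δ) (cobarD comul i B) := by
  induction i generalizing B δ with
  | zero => exact hR.sub hL
  | succ i ih =>
    have hL' := step_comm_coactL comul B ▸ isColinear_rightComm.comp hL.rTensor
    exact (hR.rTensor.cochainMap comul i).sub
      (ih (B.step comul) (rTensorCoaction C δ) hL' (isColinear_step_coactR comul B δ))

end Cobar

section Flat

variable {K D M N : Type*} [CommRing K] [AddCommGroup D] [Module K D] [Module.Flat K D]
  [AddCommGroup M] [Module K M] [AddCommGroup N] [Module K N]
  {δM : M →ₗ[K] D ⊗[K] M} {δN : N →ₗ[K] D ⊗[K] N}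

theorem IsColinear.exists_coaction_ker {f : M →ₗ[K] N} (hf : IsColinear δM δN f) :
    ∃ ρ : LinearMap.ker f →ₗ[K] D ⊗[K] LinearMap.ker f,
      IsColinear ρ δM (LinearMap.ker f).subtype := by
  have hinj : Function.Injective ((LinearMap.ker f).subtype.lTensor D) :=
    Module.Flat.lTensor_preserves_injective_linearMap _ (Submodule.injective_subtype _)
  have hmem : ∀ x : LinearMap.ker f,
      δM x ∈ LinearMap.range ((LinearMap.ker f).subtype.lTensor D) := by
    intro x
    rw [← (Module.Flat.lTensor_exact D (LinearMap.exact_subtype_ker_map f)).linearMap_ker_eq,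
      LinearMap.mem_ker, ← LinearMap.comp_apply, hf, LinearMap.comp_apply,
      LinearMap.mem_ker.mp x.2, map_zero]
  refine ⟨(LinearEquiv.ofInjective _ hinj).symm.toLinearMap ∘ₗ
    (δM ∘ₗ (LinearMap.ker f).subtype).codRestrict _ hmem, ?_⟩
  ext x
  exact LinearEquiv.ofInjective_symm_apply (f := (LinearMap.ker f).subtype.lTensor D) (h := hinj) _

theorem IsColinear.exists_coaction_quotient {d : M →ₗ[K] N} (hd : IsColinear δM δN d)
    {W : Submodule K N} {ρ : W →ₗ[K] D ⊗[K] W} (hρ : IsColinear ρ δN W.subtype) :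
    ∃ ρ' : W ⧸ (LinearMap.range d).comap W.subtype →ₗ[K]
        D ⊗[K] (W ⧸ (LinearMap.range d).comap W.subtype),
      IsColinear ρ ρ' ((LinearMap.range d).comap W.subtype).mkQ := by
  set S := (LinearMap.range d).comap W.subtype
  set j := S.mapQ (LinearMap.range d) W.subtype le_rfl
  have hj : Function.Injective (j.lTensor D) := by
    refine Module.Flat.lTensor_preserves_injective_linearMap _ ?_
    rw [← LinearMap.ker_eq_bot, Submodule.ker_mapQ]
    simp [S]
  refine ⟨S.liftQ (S.mkQ.lTensor D ∘ₗ ρ) ?_, (S.liftQ_mkQ _ _).symm⟩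
  rintro s ⟨w, hw⟩
  rw [LinearMap.mem_ker]
  apply hj
  calc j.lTensor D ((S.mkQ.lTensor D ∘ₗ ρ) s)
      = (LinearMap.range d).mkQ.lTensor D (W.subtype.lTensor D (ρ s)) := by
        rw [LinearMap.comp_apply, ← LinearMap.lTensor_comp_apply, ← LinearMap.lTensor_comp_apply,
          Submodule.mapQ_mkQ]
    _ = (LinearMap.range d).mkQ.lTensor D (d.lTensor D (δM w)) := by
        rw [← LinearMap.comp_apply (W.subtype.lTensor D), hρ, LinearMap.comp_apply, ← hw,
          ← LinearMap.comp_apply δN, ← hd, LinearMap.comp_apply]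
    _ = j.lTensor D 0 := by
        rw [← LinearMap.lTensor_comp_apply, LinearMap.range_mkQ_comp, LinearMap.lTensor_zero,
          map_zero, LinearMap.zero_apply]

end Flat

theorem cobar_differentials_are_D_comodule_morphisms_general
    {K C D : Type} [Field K] [Ring C] [HopfAlgebra K C]
    [Ring D] [HopfAlgebra K D]
    (B : BicomodData K C)
    -- the left `C`-comodule structure of `N` is trivial
    (htriv : B.coactL = (TensorProduct.mk K C B.carrier) 1)
    -- `N` is a left `D`-comodule via `δD`
    (δD : B.carrier →ₗ[K] D ⊗[K] B.carrier)
    -- `N` is a `(D,C)`-bicomodule: the two coactions commute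
    (hcompat : (LinearMap.lTensor D B.coactR) ∘ₗ δD =
      (TensorProduct.assoc K D B.carrier C).toLinearMap ∘ₗ
        (LinearMap.rTensor C δD) ∘ₗ B.coactR) :
    -- (1) every differential of the coHochschild complex is a `D`-comodule morphism
    (∀ i : ℕ,
      (LinearMap.lTensor D (cobarD (Coalgebra.comul (R := K) (A := C)) i B)) ∘ₗ
          Dcoact (Coalgebra.comul (R := K) (A := C)) D i B δD =
        Dcoact (Coalgebra.comul (R := K) (A := C)) D (i+1) B δD ∘ₗ
          cobarD (Coalgebra.comul (R := K) (A := C)) i B) ∧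
    -- (2) consequently the cocycles form a `D`-subcomodule ...
    (∀ i : ℕ,
      ∃ ρker : LinearMap.ker (cobarD (Coalgebra.comul (R := K) (A := C)) i B) →ₗ[K]
          D ⊗[K] LinearMap.ker (cobarD (Coalgebra.comul (R := K) (A := C)) i B),
        (LinearMap.lTensor D
            (LinearMap.ker (cobarD (Coalgebra.comul (R := K) (A := C)) i B)).subtype) ∘ₗ ρker =
          Dcoact (Coalgebra.comul (R := K) (A := C)) D i B δD ∘ₗ
            (LinearMap.ker (cobarD (Coalgebra.comul (R := K) (A := C)) i B)).subtype) ∧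
    -- ... and each coHochschild homology group `Hoch^{i+1}(C,N)` (cocycles modulo
    -- coboundaries; `Hoch^0` is the kernel treated in (2)) inherits a `D`-comodule
    -- structure from the one on cocycles
    (∀ (i : ℕ)
      (ρker : LinearMap.ker (cobarD (Coalgebra.comul (R := K) (A := C)) (i+1) B) →ₗ[K]
          D ⊗[K] LinearMap.ker (cobarD (Coalgebra.comul (R := K) (A := C)) (i+1) B)),
      ((LinearMap.lTensor D
            (LinearMap.ker (cobarD (Coalgebra.comul (R := K) (A := C)) (i+1) B)).subtype) ∘ₗ
          ρker =
        Dcoact (Coalgebra.comul (R := K) (A := C)) D (i+1) B δD ∘ₗ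
          (LinearMap.ker (cobarD (Coalgebra.comul (R := K) (A := C)) (i+1) B)).subtype) →
      ∃ ρ : (LinearMap.ker (cobarD (Coalgebra.comul (R := K) (A := C)) (i+1) B) ⧸
              (Submodule.comap
                (LinearMap.ker (cobarD (Coalgebra.comul (R := K) (A := C)) (i+1) B)).subtype
                (LinearMap.range (cobarD (Coalgebra.comul (R := K) (A := C)) i B)))) →ₗ[K]
            D ⊗[K] (LinearMap.ker (cobarD (Coalgebra.comul (R := K) (A := C)) (i+1) B) ⧸
              (Submodule.comap
                (LinearMap.ker (cobarD (Coalgebra.comul (R := K) (A := C)) (i+1) B)).subtype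
                (LinearMap.range (cobarD (Coalgebra.comul (R := K) (A := C)) i B)))),
        ρ ∘ₗ (Submodule.comap
                (LinearMap.ker (cobarD (Coalgebra.comul (R := K) (A := C)) (i+1) B)).subtype
                (LinearMap.range (cobarD (Coalgebra.comul (R := K) (A := C)) i B))).mkQ =
          (LinearMap.lTensor D
            (Submodule.comap
                (LinearMap.ker (cobarD (Coalgebra.comul (R := K) (A := C)) (i+1) B)).subtype
                (LinearMap.range (cobarD (Coalgebra.comul (R := K) (A := C)) i B))).mkQ) ∘ₗ
            ρker) := by
  have hL : IsColinear δD (rTensorCoaction C δD)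
      ((TensorProduct.comm K C B.carrier).toLinearMap ∘ₗ B.coactL) := by
    rw [htriv]
    exact isColinear_rTensor_mk 1
  have hd := isColinear_cobarD Coalgebra.comul B δD hL hcompat
  refine ⟨hd, fun i ↦ (hd i).exists_coaction_ker, fun i ρker hρker ↦ ?_⟩
  obtain ⟨ρ, hρ⟩ := (hd i).exists_coaction_quotient hρker
  exact ⟨ρ, hρ.symm⟩

theorem cobar_differentials_are_D_comodule_morphisms
    {K C D : Type} [Field K] [CharZero K] [Ring C] [HopfAlgebra K C]
    [Ring D] [HopfAlgebra K D]
    (B : BicomodData K C)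
    -- the left `C`-comodule structure of `N` is trivial
    (htriv : B.coactL = (TensorProduct.mk K C B.carrier) 1)
    -- `N` is a right `C`-comodule
    (hcounit : (TensorProduct.rid K B.carrier).toLinearMap ∘ₗ
        (LinearMap.lTensor B.carrier (Coalgebra.counit (R := K) (A := C))) ∘ₗ B.coactR =
      LinearMap.id)
    (hcoassoc : (LinearMap.lTensor B.carrier (Coalgebra.comul (R := K) (A := C))) ∘ₗ B.coactR =
      (TensorProduct.assoc K B.carrier C C).toLinearMap ∘ₗ
        (LinearMap.rTensor C B.coactR) ∘ₗ B.coactR)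
    -- `N` is a left `D`-comodule via `δD`
    (δD : B.carrier →ₗ[K] D ⊗[K] B.carrier)
    (hDcounit : (TensorProduct.lid K B.carrier).toLinearMap ∘ₗ
        (LinearMap.rTensor B.carrier (Coalgebra.counit (R := K) (A := D))) ∘ₗ δD =
      LinearMap.id)
    (hDcoassoc : (LinearMap.rTensor B.carrier (Coalgebra.comul (R := K) (A := D))) ∘ₗ δD =
      (TensorProduct.assoc K D D B.carrier).symm.toLinearMap ∘ₗ
        (LinearMap.lTensor D δD) ∘ₗ δD)
    -- `N` is a `(D,C)`-bicomodule: the two coactions commute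
    (hcompat : (LinearMap.lTensor D B.coactR) ∘ₗ δD =
      (TensorProduct.assoc K D B.carrier C).toLinearMap ∘ₗ
        (LinearMap.rTensor C δD) ∘ₗ B.coactR) :
    -- (1) every differential of the coHochschild complex is a `D`-comodule morphism
    (∀ i : ℕ,
      (LinearMap.lTensor D (cobarD (Coalgebra.comul (R := K) (A := C)) i B)) ∘ₗ
          Dcoact (Coalgebra.comul (R := K) (A := C)) D i B δD =
        Dcoact (Coalgebra.comul (R := K) (A := C)) D (i+1) B δD ∘ₗ
          cobarD (Coalgebra.comul (R := K) (A := C)) i B) ∧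
    -- (2) consequently the cocycles form a `D`-subcomodule ...
    (∀ i : ℕ,
      ∃ ρker : LinearMap.ker (cobarD (Coalgebra.comul (R := K) (A := C)) i B) →ₗ[K]
          D ⊗[K] LinearMap.ker (cobarD (Coalgebra.comul (R := K) (A := C)) i B),
        (LinearMap.lTensor D
            (LinearMap.ker (cobarD (Coalgebra.comul (R := K) (A := C)) i B)).subtype) ∘ₗ ρker =
          Dcoact (Coalgebra.comul (R := K) (A := C)) D i B δD ∘ₗ
            (LinearMap.ker (cobarD (Coalgebra.comul (R := K) (A := C)) i B)).subtype) ∧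
    -- ... and each coHochschild homology group `Hoch^{i+1}(C,N)` (cocycles modulo
    -- coboundaries; `Hoch^0` is the kernel treated in (2)) inherits a `D`-comodule
    -- structure from the one on cocycles
    (∀ (i : ℕ)
      (ρker : LinearMap.ker (cobarD (Coalgebra.comul (R := K) (A := C)) (i+1) B) →ₗ[K]
          D ⊗[K] LinearMap.ker (cobarD (Coalgebra.comul (R := K) (A := C)) (i+1) B)),
      ((LinearMap.lTensor D
            (LinearMap.ker (cobarD (Coalgebra.comul (R := K) (A := C)) (i+1) B)).subtype) ∘ₗ
          ρker =
        Dcoact (Coalgebra.comul (R := K) (A := C)) D (i+1) B δD ∘ₗ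
          (LinearMap.ker (cobarD (Coalgebra.comul (R := K) (A := C)) (i+1) B)).subtype) →
      ∃ ρ : (LinearMap.ker (cobarD (Coalgebra.comul (R := K) (A := C)) (i+1) B) ⧸
              (Submodule.comap
                (LinearMap.ker (cobarD (Coalgebra.comul (R := K) (A := C)) (i+1) B)).subtype
                (LinearMap.range (cobarD (Coalgebra.comul (R := K) (A := C)) i B)))) →ₗ[K]
            D ⊗[K] (LinearMap.ker (cobarD (Coalgebra.comul (R := K) (A := C)) (i+1) B) ⧸
              (Submodule.comap
                (LinearMap.ker (cobarD (Coalgebra.comul (R := K) (A := C)) (i+1) B)).subtype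
                (LinearMap.range (cobarD (Coalgebra.comul (R := K) (A := C)) i B)))),
        ρ ∘ₗ (Submodule.comap
                (LinearMap.ker (cobarD (Coalgebra.comul (R := K) (A := C)) (i+1) B)).subtype
                (LinearMap.range (cobarD (Coalgebra.comul (R := K) (A := C)) i B))).mkQ =
          (LinearMap.lTensor D
            (Submodule.comap
                (LinearMap.ker (cobarD (Coalgebra.comul (R := K) (A := C)) (i+1) B)).subtype
                (LinearMap.range (cobarD (Coalgebra.comul (R := K) (A := C)) i B))).mkQ) ∘ₗ
            ρker) :=
  cobar_differentials_are_D_comodule_morphisms_general B htriv δD hcompat
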